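/- Every hereditary chase variant preserves ancestry: if X is a chase variant such that for every X-derivation D from (F,𝓡) and every G ⊆ F the restriction D|_G is an X-derivation, then for every X-derivation D from (F,𝓡) and every atom A ∈ F^D \ F there is an X-derivation D' from (Anc⁰_D(A),𝓡) with A ∈ F^{D'} and rank_D(A) = rank_{D'}(A). -/

import Mathlib

namespace ChasePaper

/-- Terms are variables or constants, both indexed by natural numbers. -/
inductive Term : Type where
  | var : ℕ → Term
  | const : ℕ → Term
deriving DecidableEq

instance : Encodable Term :=
  Encodable.ofEquiv (ℕ ⊕ ℕ)
    { toFun := fun t => match t with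
        | .var n => Sum.inl n
        | .const n => Sum.inr n
      invFun := fun s => match s with
        | .inl n => .var n
        | .inr n => .const n
      left_inv := by intro t; cases t <;> rfl
      right_inv := by intro s; cases s <;> rfl }

/-- An atom is a predicate together with a list of argument terms. -/
structure Atom : Type where
  pred : ℕ
  args : List Term
deriving DecidableEq

instance : Encodable Atom :=
  Encodable.ofEquiv (ℕ × List Term)
    { toFun := fun A => (A.pred, A.args)
      invFun := fun p => ⟨p.1, p.2⟩
      left_inv := by intro A; rfl
      right_inv := by intro p; rfl }

/-- The variables occurring in a term. -/
def Term.vars : Term → Finset ℕ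
  | .var n => {n}
  | .const _ => ∅

/-- The variables occurring in an atom. -/
def Atom.vars (A : Atom) : Finset ℕ := A.args.toFinset.biUnion Term.vars

/-- Applying a substitution to a term. -/
def Term.subst (σ : ℕ → Term) : Term → Term
  | .var n => σ n
  | .const c => .const c

/-- Applying a substitution to an atom. -/
def Atom.subst (σ : ℕ → Term) (A : Atom) : Atom := ⟨A.pred, A.args.map (Term.subst σ)⟩

/-- The variables occurring in a set of atoms. -/
def setVars (F : Set Atom) : Set ℕ := ⋃ A ∈ F, ↑A.vars

/-- `σ` is a homomorphism from the atomset `F` to the atomset `F'`. -/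
def IsHomOn (σ : ℕ → Term) (F F' : Set Atom) : Prop := ∀ A ∈ F, A.subst σ ∈ F'

/-- `σ` is a retraction from `F` to its subset `F'`: it is the identity on the
terms of `F'` and maps `F` onto `F'`. -/
def IsRetraction (σ : ℕ → Term) (F F' : Set Atom) : Prop :=
  F' ⊆ F ∧ (∀ x ∈ setVars F', σ x = Term.var x) ∧ (Atom.subst σ) '' F = F'

/-- An existential rule, given by its body and its head. -/
structure Rule : Type where
  body : List Atom
  head : List Atom
deriving DecidableEq

instance : Encodable Rule :=
  Encodable.ofEquiv (List Atom × List Atom)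
    { toFun := fun R => (R.body, R.head)
      invFun := fun p => ⟨p.1, p.2⟩
      left_inv := by intro R; rfl
      right_inv := by intro p; rfl }

def Rule.bodyVars (R : Rule) : Finset ℕ := R.body.toFinset.biUnion Atom.vars
def Rule.headVars (R : Rule) : Finset ℕ := R.head.toFinset.biUnion Atom.vars

/-- The frontier of a rule: the variables shared by its body and its head. -/
def Rule.frontier (R : Rule) : Finset ℕ := R.bodyVars ∩ R.headVars

/-- The existential variables of a rule: head variables not occurring in the body. -/
def Rule.existVars (R : Rule) : Finset ℕ := R.headVars \ R.bodyVars

/-- The substitution determined by an association list. -/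
def SubL.fn (σ : List (ℕ × Term)) : ℕ → Term := fun n =>
  match σ.find? (fun p => p.1 == n) with
  | some p => p.2
  | none => Term.var n

/-- A trigger: a rule together with a substitution, represented as an association list. -/
structure Trigger : Type where
  rule : Rule
  π : List (ℕ × Term)
deriving DecidableEq

instance : Encodable Trigger :=
  Encodable.ofEquiv (Rule × List (ℕ × Term))
    { toFun := fun t => (t.rule, t.π)
      invFun := fun p => ⟨p.1, p.2⟩
      left_inv := by intro t; rfl
      right_inv := by intro p; rfl }

/-- The homomorphism π of a trigger, as a substitution. -/
def Trigger.πfn (t : Trigger) : ℕ → Term := SubL.fn t.π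

/-- The fresh variable `z_t` associated to trigger `t` and existential variable `z`. -/
def Trigger.freshVar (t : Trigger) (z : ℕ) : Term :=
  Term.var (Nat.pair (Encodable.encode t) z)

/-- The extension `π^s` of `π`, mapping each existential variable of the head to a
fresh variable indexed by the trigger. -/
def Trigger.πs (t : Trigger) : ℕ → Term := fun n =>
  if n ∈ t.rule.existVars then t.freshVar n else t.πfn n

/-- support(t) = π(body(R)). -/
def Trigger.support (t : Trigger) : Finset Atom :=
  (t.rule.body.map (Atom.subst t.πfn)).toFinset

/-- output(t) = π^s(head(R)). -/
def Trigger.output (t : Trigger) : Finset Atom :=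
  (t.rule.head.map (Atom.subst t.πs)).toFinset

/-- A trigger is applicable on a factbase `F` if π maps the rule body into `F`. -/
def Trigger.applicableOn (t : Trigger) (F : Finset Atom) : Prop := t.support ⊆ F

instance (t : Trigger) (F : Finset Atom) : Decidable (t.applicableOn F) :=
  inferInstanceAs (Decidable (t.support ⊆ F))

/-- The factbase obtained after `i` steps from `F0` along the (partial) sequence
of triggers `ts`. -/
def chainFacts (F0 : Finset Atom) (ts : ℕ → Option Trigger) : ℕ → Finset Atom
  | 0 => F0
  | i + 1 =>
    chainFacts F0 ts i ∪
      (match ts i with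
        | some t => t.output
        | none => ∅)

/-- A derivation from the knowledge base `(F0, 𝓡)`: a (possibly infinite) sequence
of pairwise distinct triggers of rules of `𝓡`, each applicable on the factbase
produced so far. -/
structure Derivation (𝓡 : Set Rule) (F0 : Finset Atom) : Type where
  ts : ℕ → Option Trigger
  mem_rules : ∀ i t, ts i = some t → t.rule ∈ 𝓡
  applic : ∀ i t, ts i = some t → t.applicableOn (chainFacts F0 ts i)
  distinct : ∀ i j t, ts i = some t → ts j = some t → i = j

namespace Derivation

variable {𝓡 : Set Rule} {F0 : Finset Atom}

/-- The factbase `F_i` of the derivation. -/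
def facts (D : Derivation 𝓡 F0) (i : ℕ) : Finset Atom := chainFacts F0 D.ts i

/-- `F^D`, the set of all atoms inferred by the derivation. -/
def allFacts (D : Derivation 𝓡 F0) : Set Atom := ⋃ i, ↑(D.facts i)

/-- The set of triggers used by the derivation. -/
def trigSet (D : Derivation 𝓡 F0) : Set Trigger := {t | ∃ i, D.ts i = some t}

/-- The list of the triggers of `D` at positions `< i`, in order. -/
def hist (D : Derivation 𝓡 F0) (i : ℕ) : List Trigger := (List.range i).filterMap D.ts

def rankAux (D : Derivation 𝓡 F0) : ℕ → Atom → ℕ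
  | 0, _ => 0
  | i + 1, A =>
    if A ∈ D.facts i then D.rankAux i A
    else
      match D.ts i with
      | some t => t.support.sup (D.rankAux i) + 1
      | none => 0

open Classical in
/-- The rank of an atom in a derivation (`0` for atoms not inferred by `D`): initial
atoms have rank 0, and an atom produced by a trigger has rank one plus the maximal
rank of the atoms in the support of this trigger. -/
noncomputable def rank (D : Derivation 𝓡 F0) (A : Atom) : ℕ :=
  if h : ∃ i, A ∈ D.facts i then D.rankAux (Nat.find h) A else 0

/-- The rank of the trigger applied at position `i` (`0` if there is none):
one plus the maximal rank of the atoms of its support. -/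
noncomputable def trigRank (D : Derivation 𝓡 F0) (i : ℕ) : ℕ :=
  match D.ts i with
  | some t => t.support.sup D.rank + 1
  | none => 0

/-- The depth of a derivation: the maximal rank of its atoms (possibly `⊤`). -/
noncomputable def depth (D : Derivation 𝓡 F0) : ℕ∞ :=
  ⨆ A ∈ D.allFacts, (D.rank A : ℕ∞)

/-- Rank-compatibility: later triggers have larger or equal rank. -/
def RankCompatible (D : Derivation 𝓡 F0) : Prop :=
  ∀ i j, i < j → D.ts i ≠ none → D.ts j ≠ none → D.trigRank i ≤ D.trigRank j

/-- Position `i` is a rank mark: the next applied trigger has strictly greater rank. -/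
def RankMark (D : Derivation 𝓡 F0) (i : ℕ) : Prop :=
  D.ts i ≠ none ∧
    ∃ j, i < j ∧ D.ts j ≠ none ∧ D.trigRank i < D.trigRank j ∧
      ∀ l, i < l → l < j → D.ts l = none

lemma chainFacts_congr (F0 : Finset Atom) (ts ts' : ℕ → Option Trigger) :
    ∀ i, (∀ j, j < i → ts' j = ts j) → chainFacts F0 ts' i = chainFacts F0 ts i := by
  intro i
  induction i with
  | zero => intro _; rfl
  | succ i ih =>
    intro h
    have h1 := ih (fun j hj => h j (Nat.lt_succ_of_lt hj))
    have h2 := h i (Nat.lt_succ_self i)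
    simp only [chainFacts, h1, h2]

/-- The prefix of `D` keeping only the triggers at positions `< k`. -/
def prefixD (D : Derivation 𝓡 F0) (k : ℕ) : Derivation 𝓡 F0 where
  ts := fun i => if i < k then D.ts i else none
  mem_rules := by
    intro i t h
    by_cases hik : i < k
    · exact D.mem_rules i t (by simpa [hik] using h)
    · simp [hik] at h
  applic := by
    intro i t h
    by_cases hik : i < k
    · have heq : chainFacts F0 (fun i => if i < k then D.ts i else none) i
          = chainFacts F0 D.ts i :=
        chainFacts_congr F0 D.ts _ i (fun j hj => by
          have hjk : j < k := lt_trans hj hik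
          simp [hjk])
      rw [heq]
      exact D.applic i t (by simpa [hik] using h)
    · simp [hik] at h
  distinct := by
    intro i j t hi hj
    by_cases hik : i < k
    · by_cases hjk : j < k
      · exact D.distinct i j t (by simpa [hik] using hi) (by simpa [hjk] using hj)
      · simp [hjk] at hj
    · simp [hik] at hi

/-- `D'` agrees with `D` on all positions `< k`, i.e. `D'` extends the `k`-prefix of `D`. -/
def ExtendsPrefix (D' D : Derivation 𝓡 F0) (k : ℕ) : Prop :=
  ∀ i, i < k → D'.ts i = D.ts i

/-- Finiteness of a derivation. -/
def IsFinite (D : Derivation 𝓡 F0) : Prop := ∃ N, ∀ i, N ≤ i → D.ts i = none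

/-- The atom `A` is produced at step `i` of the derivation. -/
def producedAt (D : Derivation 𝓡 F0) (i : ℕ) (A : Atom) : Prop :=
  A ∈ D.facts (i + 1) ∧ A ∉ D.facts i

/-- Edges of the chase graph of `D`. -/
def edge (D : Derivation 𝓡 F0) (A' A : Atom) : Prop :=
  ∃ i t, D.ts i = some t ∧ D.producedAt i A ∧ A' ∈ t.support

/-- `A'` is an ancestor of `A`: there is a nonempty path from `A'` to `A` in the
chase graph of `D`. -/
def anc (D : Derivation 𝓡 F0) (A' A : Atom) : Prop := Relation.TransGen D.edge A' A

open Classical in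
/-- The prime ancestors of `A`: its ancestors lying in the initial factbase. -/
noncomputable def anc0 (D : Derivation 𝓡 F0) (A : Atom) : Finset Atom :=
  F0.filter (fun A' => D.anc A' A)

/-- The factbases of the restriction of `D` to an initial factbase `G`. -/
def restFacts (D : Derivation 𝓡 F0) (G : Finset Atom) : ℕ → Finset Atom
  | 0 => G
  | i + 1 =>
    restFacts D G i ∪
      (match D.ts i with
        | some t => if t.applicableOn (restFacts D G i) then t.output else ∅
        | none => ∅)

/-- The trigger sequence of the restriction of `D` to `G`: a trigger of `D` is kept
exactly when it is applicable at the corresponding point. -/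
def restTs (D : Derivation 𝓡 F0) (G : Finset Atom) : ℕ → Option Trigger := fun i =>
  match D.ts i with
  | some t => if t.applicableOn (restFacts D G i) then some t else none
  | none => none

lemma restTs_eq_some {D : Derivation 𝓡 F0} {G : Finset Atom} {i : ℕ} {t : Trigger}
    (h : restTs D G i = some t) :
    D.ts i = some t ∧ t.applicableOn (restFacts D G i) := by
  unfold restTs at h
  cases hd : D.ts i with
  | none => rw [hd] at h; simp at h
  | some t' =>
    rw [hd] at h
    dsimp only at h
    by_cases ha : t'.applicableOn (restFacts D G i)
    · rw [if_pos ha] at h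
      injection h with h'
      subst h'
      exact ⟨rfl, ha⟩
    · rw [if_neg ha] at h; simp at h

lemma chainFacts_restTs (D : Derivation 𝓡 F0) (G : Finset Atom) (i : ℕ) :
    chainFacts G (restTs D G) i = restFacts D G i := by
  induction i with
  | zero => rfl
  | succ i ih =>
    simp only [chainFacts, restFacts, ih]
    congr 1
    unfold restTs
    cases hd : D.ts i with
    | none => rfl
    | some t =>
      by_cases ha : t.applicableOn (restFacts D G i) <;> simp [ha]

/-- The restriction of `D` to the initial factbase `G`: the maximal derivation from
`(G,𝓡)` that only uses the triggers of `D`, in the given order. -/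
def restrict (D : Derivation 𝓡 F0) (G : Finset Atom) : Derivation 𝓡 G where
  ts := restTs D G
  mem_rules := fun i t h => D.mem_rules i t (restTs_eq_some h).1
  applic := fun i t h => by
    rw [chainFacts_restTs D G i]
    exact (restTs_eq_some h).2
  distinct := fun i j t hi hj =>
    D.distinct i j t (restTs_eq_some hi).1 (restTs_eq_some hj).1

end Derivation

/-- An applicability condition: a predicate on (previously applied triggers, current
factbase, candidate trigger). A chase variant is the class of derivations induced by
such a condition. -/
def AppCond : Type := List Trigger → Finset Atom → Trigger → Prop

/-- `D` is an X-derivation of the chase variant given by the condition `C`: every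
trigger of `D` is `C`-applicable on the corresponding prefix of `D`. -/
def IsDeriv (C : AppCond) {𝓡 : Set Rule} {F0 : Finset Atom} (D : Derivation 𝓡 F0) : Prop :=
  ∀ i t, D.ts i = some t → C (D.hist i) (D.facts i) t

/-- Oblivious applicability: the trigger is applicable and has not been applied before. -/
def OCond : AppCond := fun h F t => t.applicableOn F ∧ t ∉ h

/-- Semi-oblivious applicability: no previously applied trigger of the same rule maps
the frontier in the same way. -/
def SOCond : AppCond := fun h F t =>
  t.applicableOn F ∧
    ¬ ∃ t' ∈ h, t'.rule = t.rule ∧ ∀ x ∈ t.rule.frontier, t'.πfn x = t.πfn x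

/-- Restricted applicability: there is no retraction from `F ∪ output(t)` to `F`. -/
def RCond : AppCond := fun _ F t =>
  t.applicableOn F ∧
    ¬ ∃ σ : ℕ → Term, IsRetraction σ (↑(F ∪ t.output)) (↑F)

/-- Equivalent-chase applicability: there is no homomorphism from `F ∪ output(t)` to `F`. -/
def ECond : AppCond := fun _ F t =>
  t.applicableOn F ∧
    ¬ ∃ σ : ℕ → Term, IsHomOn σ (↑(F ∪ t.output)) (↑F)

/-- Breadth-first derivations of the chase variant `C`: rank-compatible `C`-derivations
such that at every rank mark the corresponding prefix cannot be properly extended to a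
`C`-derivation of the same depth. -/
def IsBF (C : AppCond) {𝓡 : Set Rule} {F0 : Finset Atom} (D : Derivation 𝓡 F0) : Prop :=
  IsDeriv C D ∧ D.RankCompatible ∧
    ∀ i, D.RankMark i →
      ¬ ∃ D' : Derivation 𝓡 F0, IsDeriv C D' ∧ D'.ExtendsPrefix D (i + 1) ∧
          (∃ j, i + 1 ≤ j ∧ D'.ts j ≠ none) ∧ D'.depth = (D.prefixD (i + 1)).depth

/-- Fairness of a derivation with respect to the condition `C`: every trigger that
becomes applicable is eventually applied or ceases to be applicable. -/
def IsFair (C : AppCond) {𝓡 : Set Rule} {F0 : Finset Atom} (D : Derivation 𝓡 F0) : Prop :=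
  ∀ i t, t.rule ∈ 𝓡 → C (D.hist i) (D.facts i) t →
    ∃ k, i ≤ k ∧ (D.ts k = some t ∨ ¬ C (D.hist (k + 1)) (D.facts (k + 1)) t)

/-- A class of derivations (a chase variant). -/
def DerivClass := ∀ (𝓡 : Set Rule) (F0 : Finset Atom), Derivation 𝓡 F0 → Prop

/-- The class of `C`-derivations. -/
def derivClassOf (C : AppCond) : DerivClass := fun _ _ D => IsDeriv C D

/-- The class of breadth-first `C`-derivations. -/
def bfClassOf (C : AppCond) : DerivClass := fun _ _ D => IsBF C D

/-- The chase variant `X` preserves ancestry: for every `X`-derivation `D` and atom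
`A` inferred (but not initial), there is an `X`-derivation from the prime ancestors
of `A` producing `A` at the same rank. -/
def PreservesAncestry (X : DerivClass) : Prop :=
  ∀ (𝓡 : Set Rule) (F : Finset Atom) (D : Derivation 𝓡 F) (A : Atom),
    X 𝓡 F D → A ∈ D.allFacts → A ∉ F →
      ∃ D' : Derivation 𝓡 (D.anc0 A),
        X 𝓡 (D.anc0 A) D' ∧ A ∈ D'.allFacts ∧ D'.rank A = D.rank A

/-- The chase variant `X` is hereditary: restricting an `X`-derivation to a subset of
the initial factbase again yields an `X`-derivation. -/
def Hereditary (X : DerivClass) : Prop :=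
  ∀ (𝓡 : Set Rule) (F G : Finset Atom), G ⊆ F →
    ∀ D : Derivation 𝓡 F, X 𝓡 F D → X 𝓡 G (D.restrict G)

/-!
Restrict `D` to the prime ancestors of `A`. The atoms from which `A` is reachable in the chase
graph form a set closed under predecessors, so, by induction along `D`, every trigger of `D`
producing such an atom finds its whole support already derived in the restriction; it is
therefore still applied there, at the same step, and the atom gets the same rank. Heredity
makes the restriction an `X`-derivation.
-/

namespace Derivation

variable {𝓡 : Set Rule} {F0 : Finset Atom}

lemma facts_succ_of_none (D : Derivation 𝓡 F0) {i : ℕ} (h : D.ts i = none) :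
    D.facts (i + 1) = D.facts i := by
  simp [facts, chainFacts, h]

lemma facts_succ_of_some (D : Derivation 𝓡 F0) {i : ℕ} {t : Trigger} (h : D.ts i = some t) :
    D.facts (i + 1) = D.facts i ∪ t.output := by
  simp [facts, chainFacts, h]

lemma facts_subset_facts_succ (D : Derivation 𝓡 F0) (i : ℕ) : D.facts i ⊆ D.facts (i + 1) :=
  Finset.subset_union_left

lemma exists_output_of_mem_facts_succ (D : Derivation 𝓡 F0) {i : ℕ} {A : Atom}
    (hA : A ∈ D.facts (i + 1)) (hAi : A ∉ D.facts i) :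
    ∃ t, D.ts i = some t ∧ A ∈ t.output := by
  cases h : D.ts i with
  | none => exact absurd (D.facts_succ_of_none h ▸ hA) hAi
  | some t =>
    rw [D.facts_succ_of_some h, Finset.mem_union] at hA
    exact ⟨t, rfl, hA.resolve_left hAi⟩

lemma rankAux_succ_of_mem (D : Derivation 𝓡 F0) {i : ℕ} {A : Atom} (hA : A ∈ D.facts i) :
    D.rankAux (i + 1) A = D.rankAux i A := by
  simp [rankAux, hA]

lemma rankAux_succ_of_notMem (D : Derivation 𝓡 F0) {i : ℕ} {A : Atom} {t : Trigger}
    (h : D.ts i = some t) (hA : A ∉ D.facts i) :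
    D.rankAux (i + 1) A = t.support.sup (D.rankAux i) + 1 := by
  simp [rankAux, hA, h]

lemma rank_eq_of_rankAux_eq {F1 F2 : Finset Atom} (D1 : Derivation 𝓡 F1)
    (D2 : Derivation 𝓡 F2) {A : Atom} (hmem : ∀ i, A ∈ D1.facts i ↔ A ∈ D2.facts i)
    (hrank : ∀ i, A ∈ D2.facts i → D1.rankAux i A = D2.rankAux i A) :
    D1.rank A = D2.rank A := by
  by_cases h2 : ∃ i, A ∈ D2.facts i
  · have h1 : ∃ i, A ∈ D1.facts i := h2.imp fun i => (hmem i).2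
    have hfind : Nat.find h1 = Nat.find h2 := Nat.find_congr' (hmem _)
    simp only [rank, dif_pos h1, dif_pos h2, hfind]
    exact hrank _ (Nat.find_spec h2)
  · have h1 : ¬ ∃ i, A ∈ D1.facts i := fun ⟨i, hi⟩ => h2 ⟨i, (hmem i).1 hi⟩
    simp only [rank, dif_neg h1, dif_neg h2]

lemma mem_anc0 (D : Derivation 𝓡 F0) {A B : Atom} : B ∈ D.anc0 A ↔ B ∈ F0 ∧ D.anc B A := by
  classical
  simp [anc0]

lemma anc0_subset (D : Derivation 𝓡 F0) (A : Atom) : D.anc0 A ⊆ F0 := by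
  classical
  exact Finset.filter_subset _ _

lemma facts_restrict (D : Derivation 𝓡 F0) (G : Finset Atom) (i : ℕ) :
    (D.restrict G).facts i = D.restFacts G i :=
  chainFacts_restTs D G i

lemma restrict_ts_eq_some {D : Derivation 𝓡 F0} {G : Finset Atom} {i : ℕ} {t : Trigger}
    (h : (D.restrict G).ts i = some t) : D.ts i = some t :=
  (restTs_eq_some h).1

lemma restrict_ts_of_applicableOn {D : Derivation 𝓡 F0} {G : Finset Atom} {i : ℕ}
    {t : Trigger} (h : D.ts i = some t) (ht : t.applicableOn ((D.restrict G).facts i)) :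
    (D.restrict G).ts i = some t := by
  rw [facts_restrict] at ht
  change restTs D G i = some t
  simp [restTs, h, ht]

lemma facts_restrict_subset (D : Derivation 𝓡 F0) {G : Finset Atom} (hG : G ⊆ F0) (i : ℕ) :
    (D.restrict G).facts i ⊆ D.facts i := by
  induction i with
  | zero => exact hG
  | succ i ih =>
    cases h : (D.restrict G).ts i with
    | none =>
      rw [facts_succ_of_none _ h]
      exact ih.trans (D.facts_subset_facts_succ i)
    | some t =>
      rw [facts_succ_of_some _ h, D.facts_succ_of_some (restrict_ts_eq_some h)]
      exact Finset.union_subset_union ih subset_rfl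

theorem restrict_agrees_of_predecessor_closed (D : Derivation 𝓡 F0) {G : Finset Atom}
    (hG : G ⊆ F0) {S : Set Atom} (hS : ∀ B' B, D.edge B' B → B ∈ S → B' ∈ S)
    (hSG : ∀ B ∈ S, B ∈ F0 → B ∈ G) (i : ℕ) :
    ∀ B ∈ S, B ∈ D.facts i →
      B ∈ (D.restrict G).facts i ∧ (D.restrict G).rankAux i B = D.rankAux i B := by
  induction i with
  | zero => exact fun B hBS hB => ⟨hSG B hBS hB, rfl⟩
  | succ i ih =>
    intro B hBS hB
    by_cases hBi : B ∈ D.facts i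
    · obtain ⟨hmem, hrank⟩ := ih B hBS hBi
      refine ⟨(D.restrict G).facts_subset_facts_succ i hmem, ?_⟩
      rw [rankAux_succ_of_mem _ hmem, D.rankAux_succ_of_mem hBi, hrank]
    obtain ⟨t, hts, hBt⟩ := D.exists_output_of_mem_facts_succ hB hBi
    have hsupp : ∀ B' ∈ t.support, B' ∈ S ∧ B' ∈ D.facts i := fun B' hB' =>
      ⟨hS B' B ⟨i, t, hts, ⟨hB, hBi⟩, hB'⟩ hBS, D.applic i t hts hB'⟩
    have hts' : (D.restrict G).ts i = some t :=
      restrict_ts_of_applicableOn hts fun B' hB' => (ih B' (hsupp B' hB').1 (hsupp B' hB').2).1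
    have hBi' : B ∉ (D.restrict G).facts i := fun h => hBi (D.facts_restrict_subset hG i h)
    refine ⟨by rw [facts_succ_of_some _ hts']; exact Finset.mem_union_right _ hBt, ?_⟩
    rw [rankAux_succ_of_notMem _ hts' hBi', D.rankAux_succ_of_notMem hts hBi]
    congr 1
    exact Finset.sup_congr rfl fun B' hB' => (ih B' (hsupp B' hB').1 (hsupp B' hB').2).2

theorem restrict_anc0_agrees (D : Derivation 𝓡 F0) {A : Atom} (hA : A ∉ F0) {i : ℕ}
    (hAi : A ∈ D.facts i) :
    A ∈ (D.restrict (D.anc0 A)).facts i ∧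
      (D.restrict (D.anc0 A)).rankAux i A = D.rankAux i A := by
  refine D.restrict_agrees_of_predecessor_closed (S := {B | Relation.ReflTransGen D.edge B A})
    (D.anc0_subset A) (fun B' B hedge hB => hB.head hedge) ?_ i A .refl hAi
  intro B hB hBF
  rcases Relation.reflTransGen_iff_eq_or_transGen.1 hB with rfl | hanc
  · exact absurd hBF hA
  · exact D.mem_anc0.2 ⟨hBF, hanc⟩

end Derivation

/-- every hereditary chase variant preserves ancestry. -/
theorem statement15 (C : AppCond) (h : Hereditary (derivClassOf C)) :
    PreservesAncestry (derivClassOf C) := by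
  intro 𝓡 F D A hD hA hAF
  have hG := D.anc0_subset A
  have hmem : ∀ i, A ∈ (D.restrict (D.anc0 A)).facts i ↔ A ∈ D.facts i := fun i =>
    ⟨fun hi => D.facts_restrict_subset hG i hi, fun hi => (D.restrict_anc0_agrees hAF hi).1⟩
  refine ⟨D.restrict (D.anc0 A), h 𝓡 F _ hG D hD, ?_, ?_⟩
  · obtain ⟨i, hi⟩ := Set.mem_iUnion.1 hA
    exact Set.mem_iUnion.2 ⟨i, (hmem i).2 hi⟩
  · exact Derivation.rank_eq_of_rankAux_eq _ D hmem fun i hi => (D.restrict_anc0_agrees hAF hi).2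

end ChasePaper
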